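/- Assume conditions (A1) and (A2) and let P denote the orthogonal projection onto S_{(T,C)|Z}. Then for every ν ∈ ℝ^p orthogonal to S_{(T,C)|Z}: νᵀ E[(Z−Z̃)(Z−Z̃)ᵀ | T, T̃, C, C̃] ν = 2 νᵀν almost surely, where (Z̃,T̃,C̃) is an independent copy of (Z,T,C); consequently, the column space of 2I_p − E[(Z−Z̃)(Z−Z̃)ᵀ | T, T̃, C, C̃] is almost surely contained in S_{(T,C)|Z}. -/

import Mathlib

/-!
For `ν ⊥ S`, condition (A1) and `E[Z Zᵀ] = I` force `E[νᵀZ | PZ] = 0`; then (A2) and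
polarization give `E[(νᵀZ)(wᵀZ) | PZ] = νᵀw` for every `w`. Conditional independence of
`(T, C)` and `Z` given `PZ` turns this into `E[νᵀZ; (T,C) ∈ B] = 0` and
`E[(νᵀZ)(wᵀZ); (T,C) ∈ B] = νᵀw · P((T,C) ∈ B)`. Expanding `(νᵀZ - νᵀZ̃)(wᵀZ - wᵀZ̃)` on the
rectangles `{(T,C) ∈ B₁} × {(T̃,C̃) ∈ B₂}` gives `2 νᵀw` times their probability, and a π-λ
argument yields `νᵀ A w = 2 νᵀw` a.s. Testing against the vectors `eₖ - P eₖ` spanning `S^⊥`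
shows that every column of `2I - A` lies in `S`.
-/

open MeasureTheory ProbabilityTheory Matrix

noncomputable section

/-- The conditioning random vector `(T, T̃, C, C̃)` on the product space, where the second
coordinate carries the independent copy. -/
def obsTC {Ω : Type*} (T C : Ω → ℝ) (ϖ : Ω × Ω) : ℝ × ℝ × ℝ × ℝ :=
  (T ϖ.1, T ϖ.2, C ϖ.1, C ϖ.2)

/-- `A(T,T̃,C,C̃) = E[(Z−Z̃)(Z−Z̃)ᵀ | T, T̃, C, C̃]`, defined entrywise as a conditional
expectation on the product space `Ω × Ω` (whose second factor carries the independent copy). -/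
def Amat {Ω : Type*} [MeasurableSpace Ω] (μ : Measure Ω) (p : ℕ) (Z : Ω → Fin p → ℝ)
    (T C : Ω → ℝ) (ϖ : Ω × Ω) : Matrix (Fin p) (Fin p) ℝ := fun i j =>
  ((μ.prod μ)[fun ϖ' => (Z ϖ'.1 i - Z ϖ'.2 i) * (Z ϖ'.1 j - Z ϖ'.2 j) |
    MeasurableSpace.comap (obsTC T C) inferInstance]) ϖ

namespace Matrix

variable {n : Type*} [Fintype n] {P : Matrix n n ℝ} {S : Submodule ℝ (n → ℝ)}

lemma mulVec_dotProduct_of_transpose_eq (hP : Pᵀ = P) (v w : n → ℝ) :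
    P *ᵥ v ⬝ᵥ w = v ⬝ᵥ P *ᵥ w := by
  rw [dotProduct_mulVec, ← mulVec_transpose, hP]

lemma mulVec_eq_zero_of_forall_dotProduct_eq_zero (hP : Pᵀ = P)
    (hPS : ∀ v, v ∈ S ↔ ∃ w, P *ᵥ w = v) {ν : n → ℝ} (hν : ∀ u ∈ S, ν ⬝ᵥ u = 0) :
    P *ᵥ ν = 0 := by
  refine dotProduct_self_eq_zero.mp ?_
  rw [mulVec_dotProduct_of_transpose_eq hP]
  exact hν _ ((hPS _).mpr ⟨_, rfl⟩)

lemma mulVec_eq_self_of_mem (hPP : P * P = P) (hPS : ∀ v, v ∈ S ↔ ∃ w, P *ᵥ w = v) {u : n → ℝ}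
    (hu : u ∈ S) : P *ᵥ u = u := by
  obtain ⟨w, rfl⟩ := (hPS u).mp hu
  rw [mulVec_mulVec, hPP]

lemma sub_mulVec_dotProduct_eq_zero (hP : Pᵀ = P) (hPP : P * P = P)
    (hPS : ∀ v, v ∈ S ↔ ∃ w, P *ᵥ w = v) (w : n → ℝ) :
    ∀ u ∈ S, (w - P *ᵥ w) ⬝ᵥ u = 0 := by
  intro u hu
  rw [sub_dotProduct, mulVec_dotProduct_of_transpose_eq hP, mulVec_eq_self_of_mem hPP hPS hu,
    sub_self]

lemma mem_of_forall_sub_mulVec_single_dotProduct_eq_zero [DecidableEq n] (hP : Pᵀ = P)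
    (hPS : ∀ v, v ∈ S ↔ ∃ w, P *ᵥ w = v) {x : n → ℝ}
    (hx : ∀ k, (Pi.single k 1 - P *ᵥ Pi.single k 1) ⬝ᵥ x = 0) : x ∈ S := by
  refine (hPS x).mpr ⟨x, funext fun k => ?_⟩
  have := hx k
  rw [sub_dotProduct, mulVec_dotProduct_of_transpose_eq hP, single_one_dotProduct,
    single_one_dotProduct, sub_eq_zero] at this
  exact this.symm

lemma span_range_transpose_smul_one_sub_le [DecidableEq n] (hP : Pᵀ = P)
    (hPS : ∀ v, v ∈ S ↔ ∃ w, P *ᵥ w = v) {A : Matrix n n ℝ} {c : ℝ}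
    (hA : ∀ j k, (Pi.single k 1 - P *ᵥ Pi.single k 1) ⬝ᵥ A *ᵥ Pi.single j 1
      = c * ((Pi.single k 1 - P *ᵥ Pi.single k 1) ⬝ᵥ Pi.single j 1)) :
    Submodule.span ℝ (Set.range (c • 1 - A)ᵀ) ≤ S := by
  rw [Submodule.span_le]
  rintro _ ⟨j, rfl⟩
  refine mem_of_forall_sub_mulVec_single_dotProduct_eq_zero hP hPS fun k => ?_
  rw [show (c • 1 - A)ᵀ j = (c • 1 - A) *ᵥ Pi.single j 1 from (mulVec_single_one _ j).symm,
    sub_mulVec, smul_mulVec, one_mulVec, dotProduct_sub, dotProduct_smul, hA j k, smul_eq_mul,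
    sub_self]

end Matrix

section CondExp

variable {Ω : Type*} {m : MeasurableSpace Ω} [mΩ : MeasurableSpace Ω] {μ : Measure Ω}
  {f g : Ω → ℝ}

lemma integral_eq_of_condExp_ae_eq_const [IsProbabilityMeasure μ] (hm : m ≤ mΩ) {c : ℝ}
    (h : μ[f | m] =ᵐ[μ] fun _ => c) : ∫ ω, f ω ∂μ = c := by
  rw [← integral_condExp hm, integral_congr_ae h, integral_const, probReal_univ, one_smul]

lemma condExp_ae_eq_zero_of_integral_mul_eq_zero [IsFiniteMeasure μ] (hm : m ≤ mΩ)
    (hf : MemLp f 2 μ) (hg : MemLp g 2 μ) (hgm : StronglyMeasurable[m] g)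
    (hfg : μ[f | m] =ᵐ[μ] g) (horth : ∫ ω, g ω * f ω ∂μ = 0) : μ[f | m] =ᵐ[μ] 0 := by
  have hgg : ∫ ω, g ω * g ω ∂μ = 0 := by
    calc ∫ ω, g ω * g ω ∂μ = ∫ ω, (g * μ[f | m]) ω ∂μ :=
          integral_congr_ae (hfg.mono fun ω h => by simp [h])
      _ = ∫ ω, (μ[g * f | m]) ω ∂μ := integral_congr_ae
          (condExp_mul_of_stronglyMeasurable_left hgm (hg.integrable_mul hf)
            (hf.integrable one_le_two)).symm
      _ = 0 := by rw [integral_condExp hm]; exact horth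
  have hg0 : g =ᵐ[μ] 0 :=
    ((integral_eq_zero_iff_of_nonneg (fun ω => mul_self_nonneg (g ω))
      (hg.integrable_mul hg)).mp hgg).mono fun ω h => mul_self_eq_zero.mp h
  exact hfg.trans hg0

lemma condExp_sq_ae_eq_of_condExp_ae_eq_zero {c : ℝ} (hf : μ[f | m] =ᵐ[μ] 0)
    (hvar : (fun ω => μ[fun ω => f ω ^ 2 | m] ω - (μ[f | m] ω) ^ 2) =ᵐ[μ] fun _ => c) :
    μ[fun ω => f ω ^ 2 | m] =ᵐ[μ] fun _ => c := by
  filter_upwards [hf, hvar] with ω h₀ h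
  simpa [h₀] using h

lemma condExp_mul_ae_eq_integral_of_sq [IsProbabilityMeasure μ] (hm : m ≤ mΩ)
    (hf : MemLp f 2 μ) (hg : MemLp g 2 μ) {a b c : ℝ}
    (hff : μ[fun ω => f ω ^ 2 | m] =ᵐ[μ] fun _ => a)
    (hgg : μ[fun ω => g ω ^ 2 | m] =ᵐ[μ] fun _ => b)
    (hfg : μ[fun ω => (f ω + g ω) ^ 2 | m] =ᵐ[μ] fun _ => c) :
    μ[fun ω => f ω * g ω | m] =ᵐ[μ] fun _ => ∫ ω, f ω * g ω ∂μ := by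
  have sq_int : ∀ {h : Ω → ℝ}, MemLp h 2 μ → Integrable (fun ω => h ω ^ 2) μ :=
    fun hh => (memLp_two_iff_integrable_sq hh.1).mp hh
  have hfg_mem : MemLp (fun ω => f ω + g ω) 2 μ := hf.add hg
  have hpol : (fun ω => f ω * g ω)
      = (2⁻¹ : ℝ) • ((fun ω => (f ω + g ω) ^ 2) - (fun ω => f ω ^ 2) - fun ω => g ω ^ 2) := by
    funext ω; simp only [Pi.smul_apply, Pi.sub_apply, smul_eq_mul]; ring
  have hconst : μ[fun ω => f ω * g ω | m] =ᵐ[μ] fun _ => 2⁻¹ * (c - a - b) := by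
    rw [hpol]
    filter_upwards [condExp_smul (m := m) (μ := μ) (2⁻¹ : ℝ)
        ((fun ω => (f ω + g ω) ^ 2) - (fun ω => f ω ^ 2) - fun ω => g ω ^ 2),
      condExp_sub ((sq_int hfg_mem).sub (sq_int hf)) (sq_int hg) m,
      condExp_sub (sq_int hfg_mem) (sq_int hf) m, hff, hgg, hfg] with ω h₁ h₂ h₃ h₄ h₅ h₆
    rw [h₁, Pi.smul_apply, h₂, Pi.sub_apply, h₃, Pi.sub_apply, h₄, h₅, h₆, smul_eq_mul]
  rwa [integral_eq_of_condExp_ae_eq_const hm hconst]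

end CondExp

section Standardized

variable {Ω : Type*} [mΩ : MeasurableSpace Ω] {μ : Measure Ω} [IsProbabilityMeasure μ]
  {n : Type*} [Fintype n] {Z : Ω → n → ℝ} {P : Matrix n n ℝ} {S : Submodule ℝ (n → ℝ)}

lemma measurable_dotProduct_const (v : n → ℝ) : Measurable fun x : n → ℝ => v ⬝ᵥ x :=
  (continuous_const.dotProduct continuous_id).measurable

lemma condExp_dotProduct_ae_eq_zero (hP : Pᵀ = P) (hPS : ∀ v, v ∈ S ↔ ∃ w, P *ᵥ w = v)
    (hPZ : Measurable fun ω => P *ᵥ Z ω) (hZ2 : ∀ v, MemLp (fun ω => v ⬝ᵥ Z ω) 2 μ)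
    (hcov : ∀ v w, ∫ ω, (v ⬝ᵥ Z ω) * (w ⬝ᵥ Z ω) ∂μ = v ⬝ᵥ w)
    {ν a : n → ℝ} (hν : ∀ u ∈ S, ν ⬝ᵥ u = 0)
    (ha : μ[fun ω => ν ⬝ᵥ Z ω | MeasurableSpace.comap (fun ω => P *ᵥ Z ω) inferInstance]
      =ᵐ[μ] fun ω => a ⬝ᵥ P *ᵥ Z ω) :
    μ[fun ω => ν ⬝ᵥ Z ω | MeasurableSpace.comap (fun ω => P *ᵥ Z ω) inferInstance] =ᵐ[μ] 0 := by
  have hPa : ∀ x, a ⬝ᵥ P *ᵥ x = P *ᵥ a ⬝ᵥ x := fun x =>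
    (mulVec_dotProduct_of_transpose_eq hP a x).symm
  refine condExp_ae_eq_zero_of_integral_mul_eq_zero (g := fun ω => a ⬝ᵥ P *ᵥ Z ω)
    hPZ.comap_le (hZ2 ν) (by simpa only [hPa] using hZ2 (P *ᵥ a))
    ((measurable_dotProduct_const a).comp (comap_measurable _)).stronglyMeasurable ha ?_
  simp_rw [hPa]
  rw [hcov, mulVec_dotProduct_of_transpose_eq hP,
    mulVec_eq_zero_of_forall_dotProduct_eq_zero hP hPS hν, dotProduct_zero]

lemma condExp_dotProduct_mul_dotProduct_of_orthogonal (hP : Pᵀ = P)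
    (hPS : ∀ v, v ∈ S ↔ ∃ w, P *ᵥ w = v)
    (hPZ : Measurable fun ω => P *ᵥ Z ω) (hZ2 : ∀ v, MemLp (fun ω => v ⬝ᵥ Z ω) 2 μ)
    (hcov : ∀ v w, ∫ ω, (v ⬝ᵥ Z ω) * (w ⬝ᵥ Z ω) ∂μ = v ⬝ᵥ w)
    (hA1 : ∀ ν : n → ℝ, (∀ u ∈ S, ν ⬝ᵥ u = 0) → ∃ a : n → ℝ,
      μ[fun ω => ν ⬝ᵥ Z ω | MeasurableSpace.comap (fun ω => P *ᵥ Z ω) inferInstance]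
        =ᵐ[μ] fun ω => a ⬝ᵥ P *ᵥ Z ω)
    (hA2 : ∀ ν : n → ℝ, (∀ u ∈ S, ν ⬝ᵥ u = 0) → ∃ c : ℝ,
      (fun ω =>
        (μ[fun ω' => (ν ⬝ᵥ Z ω') ^ 2 |
            MeasurableSpace.comap (fun ω' => P *ᵥ Z ω') inferInstance]) ω
        - ((μ[fun ω' => ν ⬝ᵥ Z ω' |
            MeasurableSpace.comap (fun ω' => P *ᵥ Z ω') inferInstance]) ω) ^ 2) =ᵐ[μ] fun _ => c)
    {ν ν' : n → ℝ} (hν : ∀ u ∈ S, ν ⬝ᵥ u = 0) (hν' : ∀ u ∈ S, ν' ⬝ᵥ u = 0) :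
    μ[fun ω => (ν ⬝ᵥ Z ω) * (ν' ⬝ᵥ Z ω) |
      MeasurableSpace.comap (fun ω => P *ᵥ Z ω) inferInstance] =ᵐ[μ] fun _ => ν ⬝ᵥ ν' := by
  have hsq : ∀ v : n → ℝ, (∀ u ∈ S, v ⬝ᵥ u = 0) → ∃ c : ℝ,
      μ[fun ω => (v ⬝ᵥ Z ω) ^ 2 | MeasurableSpace.comap (fun ω => P *ᵥ Z ω) inferInstance]
        =ᵐ[μ] fun _ => c := by
    intro v hv
    obtain ⟨a, ha⟩ := hA1 v hv
    obtain ⟨c, hc⟩ := hA2 v hv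
    exact ⟨c, condExp_sq_ae_eq_of_condExp_ae_eq_zero
      (condExp_dotProduct_ae_eq_zero hP hPS hPZ hZ2 hcov hv ha) hc⟩
  obtain ⟨a, ha⟩ := hsq ν hν
  obtain ⟨b, hb⟩ := hsq ν' hν'
  obtain ⟨c, hc⟩ := hsq (ν + ν') fun u hu => by rw [add_dotProduct, hν u hu, hν' u hu, add_zero]
  simp_rw [add_dotProduct] at hc
  rw [← hcov]
  exact condExp_mul_ae_eq_integral_of_sq hPZ.comap_le (hZ2 ν) (hZ2 ν') ha hb hc

lemma condExp_dotProduct_mul_dotProduct (hP : Pᵀ = P) (hPP : P * P = P)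
    (hPS : ∀ v, v ∈ S ↔ ∃ w, P *ᵥ w = v)
    (hPZ : Measurable fun ω => P *ᵥ Z ω) (hZ2 : ∀ v, MemLp (fun ω => v ⬝ᵥ Z ω) 2 μ)
    (hcov : ∀ v w, ∫ ω, (v ⬝ᵥ Z ω) * (w ⬝ᵥ Z ω) ∂μ = v ⬝ᵥ w)
    (hA1 : ∀ ν : n → ℝ, (∀ u ∈ S, ν ⬝ᵥ u = 0) → ∃ a : n → ℝ,
      μ[fun ω => ν ⬝ᵥ Z ω | MeasurableSpace.comap (fun ω => P *ᵥ Z ω) inferInstance]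
        =ᵐ[μ] fun ω => a ⬝ᵥ P *ᵥ Z ω)
    (hA2 : ∀ ν : n → ℝ, (∀ u ∈ S, ν ⬝ᵥ u = 0) → ∃ c : ℝ,
      (fun ω =>
        (μ[fun ω' => (ν ⬝ᵥ Z ω') ^ 2 |
            MeasurableSpace.comap (fun ω' => P *ᵥ Z ω') inferInstance]) ω
        - ((μ[fun ω' => ν ⬝ᵥ Z ω' |
            MeasurableSpace.comap (fun ω' => P *ᵥ Z ω') inferInstance]) ω) ^ 2) =ᵐ[μ] fun _ => c)
    {ν : n → ℝ} (hν : ∀ u ∈ S, ν ⬝ᵥ u = 0) (w : n → ℝ) :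
    μ[fun ω => (ν ⬝ᵥ Z ω) * (w ⬝ᵥ Z ω) |
      MeasurableSpace.comap (fun ω => P *ᵥ Z ω) inferInstance] =ᵐ[μ] fun _ => ν ⬝ᵥ w := by
  -- split `w = P w + (w - P w)`: the first part pairs `Z` into a function of `P Z`,
  -- the second is orthogonal to `S`
  set w' := w - P *ᵥ w
  have hw' : ∀ u ∈ S, w' ⬝ᵥ u = 0 := sub_mulVec_dotProduct_eq_zero hP hPP hPS w
  have hνw' : ν ⬝ᵥ w' = ν ⬝ᵥ w := by
    rw [dotProduct_sub, ← mulVec_dotProduct_of_transpose_eq hP,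
      mulVec_eq_zero_of_forall_dotProduct_eq_zero hP hPS hν, zero_dotProduct, sub_zero]
  have hsplit : (fun ω => (ν ⬝ᵥ Z ω) * (w ⬝ᵥ Z ω))
      = (fun ω => w ⬝ᵥ P *ᵥ Z ω) * (fun ω => ν ⬝ᵥ Z ω)
        + fun ω => (ν ⬝ᵥ Z ω) * (w' ⬝ᵥ Z ω) := by
    funext ω
    simp only [Pi.add_apply, Pi.mul_apply, w', sub_dotProduct,
      mulVec_dotProduct_of_transpose_eq hP]
    ring
  have hPw : (fun ω => w ⬝ᵥ P *ᵥ Z ω) = fun ω => P *ᵥ w ⬝ᵥ Z ω :=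
    funext fun ω => (mulVec_dotProduct_of_transpose_eq hP w (Z ω)).symm
  have hint₁ : Integrable ((fun ω => w ⬝ᵥ P *ᵥ Z ω) * fun ω => ν ⬝ᵥ Z ω) μ :=
    hPw ▸ (hZ2 (P *ᵥ w)).integrable_mul (hZ2 ν)
  have hint₂ : Integrable (fun ω => (ν ⬝ᵥ Z ω) * (w' ⬝ᵥ Z ω)) μ :=
    (hZ2 ν).integrable_mul (hZ2 w')
  obtain ⟨a, ha⟩ := hA1 ν hν
  rw [hsplit]
  filter_upwards [condExp_add hint₁ hint₂ _,
    condExp_mul_of_stronglyMeasurable_left (f := fun ω => w ⬝ᵥ P *ᵥ Z ω)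
      (m := MeasurableSpace.comap (fun ω => P *ᵥ Z ω) inferInstance)
      ((measurable_dotProduct_const w).comp (comap_measurable _)).stronglyMeasurable hint₁
      ((hZ2 ν).integrable one_le_two),
    condExp_dotProduct_ae_eq_zero hP hPS hPZ hZ2 hcov hν ha,
    condExp_dotProduct_mul_dotProduct_of_orthogonal hP hPS hPZ hZ2 hcov hA1 hA2 hν hw']
    with ω h₁ h₂ h₃ h₄
  rw [h₁, Pi.add_apply, h₂, Pi.mul_apply, h₃, h₄, hνw', Pi.zero_apply, mul_zero, zero_add]

end Standardized

section Product

variable {Ω : Type*} {m₀ : MeasurableSpace Ω} [mΩ : MeasurableSpace Ω] {μ : Measure Ω}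

lemma setIntegral_eq_of_isPiSystem [IsFiniteMeasure μ] {s : Set (Set Ω)}
    (h_eq : m₀ = MeasurableSpace.generateFrom s) (h_pi : IsPiSystem s) (hm₀ : m₀ ≤ mΩ)
    {f g : Ω → ℝ} (hf : Integrable f μ) (hg : Integrable g μ) (h_univ : ∫ ω, f ω ∂μ = ∫ ω, g ω ∂μ)
    (h_basic : ∀ t ∈ s, ∫ ω in t, f ω ∂μ = ∫ ω in t, g ω ∂μ)
    {t : Set Ω} (ht : MeasurableSet[m₀] t) : ∫ ω in t, f ω ∂μ = ∫ ω in t, g ω ∂μ := by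
  induction t, ht using MeasurableSpace.induction_on_inter h_eq h_pi with
  | empty => simp
  | basic t ht => exact h_basic t ht
  | compl t ht ih =>
    have hf' := integral_add_compl (hm₀ t ht) hf
    have hg' := integral_add_compl (hm₀ t ht) hg
    linarith
  | iUnion t hdisj ht ih =>
    rw [integral_iUnion (fun i => hm₀ _ (ht i)) hdisj hf.integrableOn,
      integral_iUnion (fun i => hm₀ _ (ht i)) hdisj hg.integrableOn]
    exact tsum_congr ih

lemma condExp_prod_ae_eq_const_of_setIntegral_prod [IsProbabilityMeasure μ]
    (hm₀ : m₀ ≤ mΩ) {G : Ω × Ω → ℝ} (hG : Integrable G (μ.prod μ))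
    {c : ℝ} (hrect : ∀ s t, MeasurableSet[m₀] s → MeasurableSet[m₀] t →
      ∫ ϖ in s ×ˢ t, G ϖ ∂(μ.prod μ) = c * (μ.real s * μ.real t)) :
    (μ.prod μ)[G | m₀.prod m₀] =ᵐ[μ.prod μ] fun _ => c := by
  have hle : m₀.prod m₀ ≤ Prod.instMeasurableSpace :=
    sup_le_sup (MeasurableSpace.comap_mono hm₀) (MeasurableSpace.comap_mono hm₀)
  refine (ae_eq_condExp_of_forall_setIntegral_eq hle hG (fun _ _ _ => integrableOn_const)
    (fun u hu _ => ?_) aestronglyMeasurable_const).symm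
  refine setIntegral_eq_of_isPiSystem (@generateFrom_prod Ω Ω m₀ m₀).symm
    (@isPiSystem_prod Ω Ω m₀ m₀) hle (integrable_const c) hG ?_ ?_ hu
  · simpa using (hrect Set.univ Set.univ MeasurableSet.univ MeasurableSet.univ).symm
  · rintro _ ⟨s, hs, t, ht, rfl⟩
    rw [hrect s t hs ht, setIntegral_const, smul_eq_mul, measureReal_prod_prod, mul_comm]

lemma memLp_sub_prod [IsProbabilityMeasure μ] {q : ENNReal} {f : Ω → ℝ} (hf : MemLp f q μ) :
    MemLp (fun ϖ : Ω × Ω => f ϖ.1 - f ϖ.2) q (μ.prod μ) :=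
  (hf.comp_measurePreserving measurePreserving_fst).sub
    (hf.comp_measurePreserving measurePreserving_snd)

lemma setIntegral_prod_sub_mul_sub [IsFiniteMeasure μ] {U V : Ω → ℝ} (hU : MemLp U 2 μ)
    (hV : MemLp V 2 μ) {A₁ A₂ : Set Ω} {d : ℝ}
    (hU₁ : ∫ ω in A₁, U ω ∂μ = 0) (hU₂ : ∫ ω in A₂, U ω ∂μ = 0)
    (hUV₁ : ∫ ω in A₁, U ω * V ω ∂μ = d * μ.real A₁)
    (hUV₂ : ∫ ω in A₂, U ω * V ω ∂μ = d * μ.real A₂) :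
    ∫ ϖ in A₁ ×ˢ A₂, (U ϖ.1 - U ϖ.2) * (V ϖ.1 - V ϖ.2) ∂(μ.prod μ)
      = 2 * d * (μ.real A₁ * μ.real A₂) := by
  have hUi : Integrable U μ := hU.integrable one_le_two
  have hVi : Integrable V μ := hV.integrable one_le_two
  have hUVi : Integrable (fun ω => U ω * V ω) μ := hU.integrable_mul hV
  have hprod : ∀ {f g : Ω → ℝ}, Integrable f μ → Integrable g μ →
      Integrable (fun ϖ : Ω × Ω => f ϖ.1 * g ϖ.2) ((μ.restrict A₁).prod (μ.restrict A₂)) :=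
    fun hf hg => hf.integrableOn.mul_prod hg.integrableOn
  rw [← Measure.prod_restrict]
  calc ∫ ϖ, (U ϖ.1 - U ϖ.2) * (V ϖ.1 - V ϖ.2) ∂(μ.restrict A₁).prod (μ.restrict A₂)
      = ∫ ϖ, ((U ϖ.1 * V ϖ.1) * 1 + 1 * (U ϖ.2 * V ϖ.2)) - (U ϖ.1 * V ϖ.2 + V ϖ.1 * U ϖ.2)
          ∂(μ.restrict A₁).prod (μ.restrict A₂) := by congr 1; funext ϖ; ring
    _ = (∫ ω in A₁, U ω * V ω ∂μ) * (∫ _ in A₂, 1 ∂μ)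
          + (∫ _ in A₁, 1 ∂μ) * (∫ ω in A₂, U ω * V ω ∂μ)
          - ((∫ ω in A₁, U ω ∂μ) * (∫ ω in A₂, V ω ∂μ)
            + (∫ ω in A₁, V ω ∂μ) * (∫ ω in A₂, U ω ∂μ)) := by
        have h₁ := hprod hUVi (integrable_const 1)
        have h₂ := hprod (integrable_const 1) hUVi
        have h₃ := hprod hUi hVi
        have h₄ := hprod hVi hUi
        have h₁₂ : Integrable (fun ϖ : Ω × Ω => U ϖ.1 * V ϖ.1 * 1 + 1 * (U ϖ.2 * V ϖ.2))
            ((μ.restrict A₁).prod (μ.restrict A₂)) := h₁.add h₂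
        have h₃₄ : Integrable (fun ϖ : Ω × Ω => U ϖ.1 * V ϖ.2 + V ϖ.1 * U ϖ.2)
            ((μ.restrict A₁).prod (μ.restrict A₂)) := h₃.add h₄
        rw [integral_sub h₁₂ h₃₄, integral_add h₁ h₂, integral_add h₃ h₄,
          integral_prod_mul (fun ω => U ω * V ω) (fun _ => (1 : ℝ)),
          integral_prod_mul (fun _ => (1 : ℝ)) (fun ω => U ω * V ω), integral_prod_mul U V,
          integral_prod_mul V U]
    _ = 2 * d * (μ.real A₁ * μ.real A₂) := by
        rw [hU₁, hU₂, hUV₁, hUV₂, setIntegral_const, setIntegral_const]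
        simp only [smul_eq_mul, mul_one]
        ring

end Product

section CondIndep

variable {Ω β γ : Type*} {m : MeasurableSpace Ω} [mΩ : MeasurableSpace Ω] [StandardBorelSpace Ω]
  {μ : Measure Ω} [mβ : MeasurableSpace β] [MeasurableSpace γ]

lemma ae_condExp_indicator_mem_Icc [IsFiniteMeasure μ] (hm : m ≤ mΩ) {s : Set Ω}
    (hs : MeasurableSet s) : ∀ᵐ ω ∂μ, μ[s.indicator fun _ => (1 : ℝ) | m] ω ∈ Set.Icc 0 1 := by
  filter_upwards [condExpKernel_ae_eq_condExp (μ := μ) hm hs] with ω h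
  rw [← h]
  exact ⟨measureReal_nonneg, measureReal_le_one⟩

/-- Conditional independence of `Y` and `W` given `m` says that on `σ(W)` the measure `μ`
restricted to `{Y ∈ B}` has density `P(Y ∈ B | m)`. -/
lemma setIntegral_preimage_eq_integral_condExp_mul [IsFiniteMeasure μ] {Y : Ω → β} {W : Ω → γ}
    (hY : Measurable Y) (hW : Measurable W) (hm : m ≤ mΩ) (hci : CondIndepFun m hm Y W μ)
    {g : γ → ℝ} (hg : Measurable g) {B : Set β} (hB : MeasurableSet B) :
    ∫ ω in Y ⁻¹' B, g (W ω) ∂μ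
      = ∫ ω, μ[(Y ⁻¹' B).indicator fun _ => (1 : ℝ) | m] ω * g (W ω) ∂μ := by
  set κ := μ[(Y ⁻¹' B).indicator fun _ => (1 : ℝ) | m]
  have hκ := ae_condExp_indicator_mem_Icc (μ := μ) hm (hY hB)
  have hκm : Measurable κ := stronglyMeasurable_condExp.measurable.mono hm le_rfl
  have hκ_bound : ∀ᵐ ω ∂μ, ‖κ ω‖ ≤ 1 := hκ.mono fun ω h => by
    rw [Real.norm_eq_abs, abs_le]; exact ⟨by linarith [h.1], h.2⟩
  have hrect : ∀ t, MeasurableSet t →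
      μ (W ⁻¹' t ∩ Y ⁻¹' B) = ∫⁻ ω in W ⁻¹' t, ENNReal.ofReal (κ ω) ∂μ := by
    intro t ht
    have hind : Integrable ((W ⁻¹' t).indicator fun _ => (1 : ℝ)) μ :=
      (integrable_const 1).indicator (hW ht)
    have hreal : μ.real (Y ⁻¹' B ∩ W ⁻¹' t) = ∫ ω in W ⁻¹' t, κ ω ∂μ := by
      calc μ.real (Y ⁻¹' B ∩ W ⁻¹' t)
          = ∫ ω, μ[(Y ⁻¹' B ∩ W ⁻¹' t).indicator fun _ => (1 : ℝ) | m] ω ∂μ := by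
            rw [integral_condExp hm, integral_indicator ((hY hB).inter (hW ht)),
              setIntegral_const, smul_eq_mul, mul_one]
        _ = ∫ ω, κ ω * μ[(W ⁻¹' t).indicator fun _ => (1 : ℝ) | m] ω ∂μ :=
            integral_congr_ae
              (((condIndepFun_iff_condExp_inter_preimage_eq_mul hY hW).mp hci) B t hB ht)
        _ = ∫ ω, μ[κ * (W ⁻¹' t).indicator fun _ => (1 : ℝ) | m] ω ∂μ :=
            integral_congr_ae (condExp_stronglyMeasurable_mul_of_bound hm
              stronglyMeasurable_condExp hind 1 hκ_bound).symm
        _ = ∫ ω in W ⁻¹' t, κ ω ∂μ := by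
            rw [integral_condExp hm, ← integral_indicator (hW ht)]
            congr 1
            funext ω
            by_cases hω : ω ∈ W ⁻¹' t <;> simp [hω]
    rw [Set.inter_comm, ← ofReal_measureReal, hreal,
      ofReal_integral_eq_lintegral_ofReal integrable_condExp.integrableOn
        (ae_restrict_of_ae (hκ.mono fun ω h => h.1))]
  have hmap : (μ.restrict (Y ⁻¹' B)).map W
      = (μ.withDensity fun ω => ENNReal.ofReal (κ ω)).map W := by
    ext t ht
    rw [Measure.map_apply hW ht, Measure.map_apply hW ht, Measure.restrict_apply (hW ht),
      withDensity_apply _ (hW ht), hrect t ht]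
  calc ∫ ω in Y ⁻¹' B, g (W ω) ∂μ
      = ∫ x, g x ∂(μ.restrict (Y ⁻¹' B)).map W :=
        (integral_map hW.aemeasurable hg.aestronglyMeasurable).symm
    _ = ∫ ω, g (W ω) ∂μ.withDensity fun ω => ENNReal.ofReal (κ ω) := by
        rw [hmap, integral_map hW.aemeasurable hg.aestronglyMeasurable]
    _ = ∫ ω, κ ω * g (W ω) ∂μ := by
        rw [integral_withDensity_eq_integral_toReal_smul hκm.ennreal_ofReal
          (ae_of_all _ fun _ => ENNReal.ofReal_lt_top)]
        refine integral_congr_ae (hκ.mono fun ω h => ?_)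
        change (ENNReal.ofReal (κ ω)).toReal * g (W ω) = κ ω * g (W ω)
        rw [ENNReal.toReal_ofReal h.1]

lemma setIntegral_preimage_eq_mul_of_condExp_ae_eq_const [IsProbabilityMeasure μ]
    {Y : Ω → β} {W : Ω → γ} (hY : Measurable Y) (hW : Measurable W) (hm : m ≤ mΩ)
    (hci : CondIndepFun m hm Y W μ) {g : γ → ℝ} (hg : Measurable g)
    (hgi : Integrable (fun ω => g (W ω)) μ) {c : ℝ}
    (hc : μ[fun ω => g (W ω) | m] =ᵐ[μ] fun _ => c) {B : Set β} (hB : MeasurableSet B) :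
    ∫ ω in Y ⁻¹' B, g (W ω) ∂μ = c * μ.real (Y ⁻¹' B) := by
  set κ := μ[(Y ⁻¹' B).indicator fun _ => (1 : ℝ) | m]
  have hκ_bound : ∀ᵐ ω ∂μ, ‖κ ω‖ ≤ 1 := (ae_condExp_indicator_mem_Icc hm (hY hB)).mono
    fun ω h => by rw [Real.norm_eq_abs, abs_le]; exact ⟨by linarith [h.1], h.2⟩
  calc ∫ ω in Y ⁻¹' B, g (W ω) ∂μ = ∫ ω, κ ω * g (W ω) ∂μ :=
        setIntegral_preimage_eq_integral_condExp_mul hY hW hm hci hg hB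
    _ = ∫ ω, (κ * μ[fun ω => g (W ω) | m]) ω ∂μ := by
        rw [← integral_condExp hm]
        exact integral_congr_ae (condExp_stronglyMeasurable_mul_of_bound hm
          stronglyMeasurable_condExp hgi 1 hκ_bound)
    _ = ∫ ω, κ ω * c ∂μ := integral_congr_ae (hc.mono fun ω h => by simp [h])
    _ = c * μ.real (Y ⁻¹' B) := by
        rw [integral_mul_const, integral_condExp hm, integral_indicator (hY hB),
          setIntegral_const, smul_eq_mul, mul_one, mul_comm]

lemma condExp_prod_sub_mul_sub_ae_eq_const [IsProbabilityMeasure μ] {Y : Ω → β} {W : Ω → γ}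
    (hY : Measurable Y) (hW : Measurable W) (hm : m ≤ mΩ)
    (hci : CondIndepFun m hm Y W μ) {u v : γ → ℝ} (hu : Measurable u) (hv : Measurable v)
    (hu2 : MemLp (fun ω => u (W ω)) 2 μ) (hv2 : MemLp (fun ω => v (W ω)) 2 μ)
    (hu0 : μ[fun ω => u (W ω) | m] =ᵐ[μ] 0) {d : ℝ}
    (huv : μ[fun ω => u (W ω) * v (W ω) | m] =ᵐ[μ] fun _ => d) :
    (μ.prod μ)[fun ϖ => (u (W ϖ.1) - u (W ϖ.2)) * (v (W ϖ.1) - v (W ϖ.2)) |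
      (mβ.comap Y).prod (mβ.comap Y)] =ᵐ[μ.prod μ] fun _ => 2 * d := by
  refine condExp_prod_ae_eq_const_of_setIntegral_prod hY.comap_le
    ((memLp_sub_prod hu2).integrable_mul (memLp_sub_prod hv2)) ?_
  rintro _ _ ⟨B₁, hB₁, rfl⟩ ⟨B₂, hB₂, rfl⟩
  have huv_int : Integrable (fun ω => u (W ω) * v (W ω)) μ := hu2.integrable_mul hv2
  have hu_int : Integrable (fun ω => u (W ω)) μ := hu2.integrable one_le_two
  have hU : ∀ {B}, MeasurableSet B → ∫ ω in Y ⁻¹' B, u (W ω) ∂μ = 0 := fun hB => by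
    rw [setIntegral_preimage_eq_mul_of_condExp_ae_eq_const (c := 0) hY hW hm hci hu hu_int hu0
      hB, zero_mul]
  have hUV : ∀ {B}, MeasurableSet B →
      ∫ ω in Y ⁻¹' B, u (W ω) * v (W ω) ∂μ = d * μ.real (Y ⁻¹' B) := fun hB =>
    setIntegral_preimage_eq_mul_of_condExp_ae_eq_const (g := fun x => u x * v x) hY hW hm hci
      (hu.mul hv) huv_int huv hB
  exact setIntegral_prod_sub_mul_sub hu2 hv2 (hU hB₁) (hU hB₂) (hUV hB₁) (hUV hB₂)

end CondIndep

lemma comap_obsTC {Ω : Type*} (T C : Ω → ℝ) :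
    MeasurableSpace.comap (obsTC T C) inferInstance
      = (MeasurableSpace.comap (fun ω => (T ω, C ω)) inferInstance).prod
          (MeasurableSpace.comap (fun ω => (T ω, C ω)) inferInstance) := by
  -- both sides are the join of the σ-algebras generated by `T` and `C` on each factor
  simp only [Prod.instMeasurableSpace, MeasurableSpace.prod, MeasurableSpace.comap_sup,
    MeasurableSpace.comap_comp]
  ac_rfl

lemma dotProduct_mulVec_ae_eq_condExp {Ω : Type*} {m : MeasurableSpace Ω} [MeasurableSpace Ω]
    {μ : Measure Ω} {n : Type*} [Fintype n] {D : Ω → n → ℝ} {M : Ω → Matrix n n ℝ}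
    (hM : ∀ ω i j, M ω i j = μ[fun ω => D ω i * D ω j | m] ω)
    (hD : ∀ i j, Integrable (fun ω => D ω i * D ω j) μ) (v w : n → ℝ) :
    (fun ω => v ⬝ᵥ M ω *ᵥ w) =ᵐ[μ] μ[fun ω => (v ⬝ᵥ D ω) * (w ⬝ᵥ D ω) | m] := by
  have hexpand : (fun ω => (v ⬝ᵥ D ω) * (w ⬝ᵥ D ω))
      = ∑ q : n × n, (v q.1 * w q.2) • fun ω => D ω q.1 * D ω q.2 := by
    funext ω
    simp only [dotProduct, Finset.sum_mul_sum, Finset.sum_apply, Fintype.sum_prod_type,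
      Pi.smul_apply, smul_eq_mul]
    exact Finset.sum_congr rfl fun i _ => Finset.sum_congr rfl fun j _ => by ring
  rw [hexpand]
  filter_upwards [condExp_finsetSum (s := Finset.univ)
      (fun (q : n × n) _ => (hD q.1 q.2).smul (v q.1 * w q.2)) m,
    ae_all_iff.2 fun q : n × n =>
      condExp_smul (m := m) (μ := μ) (v q.1 * w q.2) (fun ω => D ω q.1 * D ω q.2)] with ω h₁ h₂
  rw [h₁, Finset.sum_apply, Finset.sum_congr rfl fun q _ => h₂ q, Fintype.sum_prod_type]
  simp only [Pi.smul_apply, smul_eq_mul, hM, dotProduct, mulVec, Finset.mul_sum]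
  exact Finset.sum_congr rfl fun i _ => Finset.sum_congr rfl fun j _ => by ring

section Moments

variable {Ω : Type*} [MeasurableSpace Ω] {μ : Measure Ω} {n : Type*} {Z : Ω → n → ℝ}

/-- A nonzero Bochner integral certifies integrability. -/
lemma memLp_two_apply_of_integral_mul_self_ne_zero (hZ : Measurable Z)
    (hZZ : ∀ i, ∫ ω, Z ω i * Z ω i ∂μ ≠ 0) (i : n) : MemLp (fun ω => Z ω i) 2 μ := by
  refine (memLp_two_iff_integrable_sq (f := fun ω => Z ω i)
    ((measurable_pi_apply i).comp hZ).aestronglyMeasurable).mpr ?_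
  simpa only [sq] using Integrable.of_integral_ne_zero (hZZ i)

lemma memLp_dotProduct [Fintype n] {q : ENNReal} (hZ : ∀ i, MemLp (fun ω => Z ω i) q μ)
    (v : n → ℝ) : MemLp (fun ω => v ⬝ᵥ Z ω) q μ := by
  simpa only [dotProduct, Finset.sum_fn] using
    memLp_finsetSum' Finset.univ fun i _ => (hZ i).const_mul (v i)

lemma integral_dotProduct_mul_dotProduct [Fintype n] [DecidableEq n]
    (hZi : ∀ i, MemLp (fun ω => Z ω i) 2 μ)
    (hcov : ∀ i j, ∫ ω, Z ω i * Z ω j ∂μ = (1 : Matrix n n ℝ) i j) (v w : n → ℝ) :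
    ∫ ω, (v ⬝ᵥ Z ω) * (w ⬝ᵥ Z ω) ∂μ = v ⬝ᵥ w := by
  have hZij : ∀ i j, Integrable (fun ω => v i * w j * (Z ω i * Z ω j)) μ := fun i j =>
    ((hZi i).integrable_mul (hZi j)).const_mul _
  calc ∫ ω, (v ⬝ᵥ Z ω) * (w ⬝ᵥ Z ω) ∂μ
      = ∫ ω, ∑ i, ∑ j, v i * w j * (Z ω i * Z ω j) ∂μ := by
        congr 1; funext ω
        simp only [dotProduct, Finset.sum_mul_sum]
        exact Finset.sum_congr rfl fun i _ => Finset.sum_congr rfl fun j _ => by ring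
    _ = ∑ i, ∑ j, v i * w j * (1 : Matrix n n ℝ) i j := by
        rw [integral_finsetSum _ fun i _ => integrable_finsetSum _ fun j _ => hZij i j]
        refine Finset.sum_congr rfl fun i _ => ?_
        rw [integral_finsetSum _ fun j _ => hZij i j]
        simp only [integral_const_mul, hcov]
    _ = v ⬝ᵥ w := by simp [Matrix.one_apply, dotProduct]

end Moments

lemma dotProduct_Amat_mulVec_ae_eq {Ω : Type*} [MeasurableSpace Ω] [StandardBorelSpace Ω]
    {μ : Measure Ω} [IsProbabilityMeasure μ] {p : ℕ} {Z : Ω → Fin p → ℝ} (hZ : Measurable Z)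
    (hZi : ∀ i, MemLp (fun ω => Z ω i) 2 μ)
    (hcov : ∀ v w, ∫ ω, (v ⬝ᵥ Z ω) * (w ⬝ᵥ Z ω) ∂μ = v ⬝ᵥ w)
    {T C : Ω → ℝ} (hT : Measurable T) (hC : Measurable C)
    {S : Submodule ℝ (Fin p → ℝ)} {P : Matrix (Fin p) (Fin p) ℝ}
    (hP : Pᵀ = P) (hPP : P * P = P) (hPS : ∀ v, v ∈ S ↔ ∃ w, P *ᵥ w = v)
    (hPZ : Measurable fun ω => P *ᵥ Z ω)
    (hci : CondIndepFun (MeasurableSpace.comap (fun ω => P *ᵥ Z ω) inferInstance)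
      hPZ.comap_le (fun ω => (T ω, C ω)) Z μ)
    (hA1 : ∀ ν : Fin p → ℝ, (∀ u ∈ S, ν ⬝ᵥ u = 0) → ∃ a : Fin p → ℝ,
      μ[fun ω => ν ⬝ᵥ Z ω | MeasurableSpace.comap (fun ω => P *ᵥ Z ω) inferInstance]
        =ᵐ[μ] fun ω => a ⬝ᵥ P *ᵥ Z ω)
    (hA2 : ∀ ν : Fin p → ℝ, (∀ u ∈ S, ν ⬝ᵥ u = 0) → ∃ c : ℝ,
      (fun ω =>
        (μ[fun ω' => (ν ⬝ᵥ Z ω') ^ 2 |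
            MeasurableSpace.comap (fun ω' => P *ᵥ Z ω') inferInstance]) ω
        - ((μ[fun ω' => ν ⬝ᵥ Z ω' |
            MeasurableSpace.comap (fun ω' => P *ᵥ Z ω') inferInstance]) ω) ^ 2) =ᵐ[μ] fun _ => c)
    {ν : Fin p → ℝ} (hν : ∀ u ∈ S, ν ⬝ᵥ u = 0) (w : Fin p → ℝ) :
    (fun ϖ => ν ⬝ᵥ Amat μ p Z T C ϖ *ᵥ w) =ᵐ[μ.prod μ] fun _ => 2 * (ν ⬝ᵥ w) := by
  have hZ2 := memLp_dotProduct hZi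
  obtain ⟨a, ha⟩ := hA1 ν hν
  refine (dotProduct_mulVec_ae_eq_condExp (M := Amat μ p Z T C)
    (m := MeasurableSpace.comap (obsTC T C) inferInstance) (D := fun ϖ => Z ϖ.1 - Z ϖ.2)
    (fun _ _ _ => rfl)
    (fun i j => (memLp_sub_prod (hZi i)).integrable_mul (memLp_sub_prod (hZi j))) ν w).trans ?_
  rw [comap_obsTC]
  simpa only [dotProduct_sub] using condExp_prod_sub_mul_sub_ae_eq_const (hT.prodMk hC) hZ
    hPZ.comap_le hci (measurable_dotProduct_const ν) (measurable_dotProduct_const w)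
    (hZ2 ν) (hZ2 w) (condExp_dotProduct_ae_eq_zero hP hPS hPZ hZ2 hcov hν ha)
    (condExp_dotProduct_mul_dotProduct hP hPP hPS hPZ hZ2 hcov hA1 hA2 hν w)

theorem stmt11_general {Ω : Type*} [MeasurableSpace Ω] [StandardBorelSpace Ω]
    (μ : Measure Ω) [IsProbabilityMeasure μ]
    (p : ℕ) (X : Ω → Fin p → ℝ) (hX : Measurable X)
    (μv : Fin p → ℝ)
    -- `R = Σ^{-1/2}` and `Z = Σ^{-1/2}(X − μ)` is the standardized covariate
    (R : Matrix (Fin p) (Fin p) ℝ)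
    (Z : Ω → Fin p → ℝ) (hZdef : ∀ ω, Z ω = R.mulVec (X ω - μv))
    (hZcov : ∀ i j, ∫ ω, Z ω i * Z ω j ∂μ = (1 : Matrix (Fin p) (Fin p) ℝ) i j)
    (T C : Ω → ℝ) (hT : Measurable T) (hC : Measurable C)
    -- the central subspace `S = S_{(T,C)|Z}`, with orthogonal projection matrix `P` onto it
    (S : Submodule ℝ (Fin p → ℝ)) (P : Matrix (Fin p) (Fin p) ℝ)
    (hPsymm : Pᵀ = P) (hPidem : P * P = P)
    (hPrange : ∀ v : Fin p → ℝ, v ∈ S ↔ ∃ w, P.mulVec w = v)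
    (hPZmeas : Measurable (fun ω => P.mulVec (Z ω)))
    (hcentral : CondIndepFun (MeasurableSpace.comap (fun ω => P.mulVec (Z ω)) inferInstance)
      hPZmeas.comap_le (fun ω => (T ω, C ω)) Z μ)
    -- condition (A1)
    (hA1 : ∀ ν : Fin p → ℝ, (∀ u ∈ S, ν ⬝ᵥ u = 0) →
      ∃ a : Fin p → ℝ,
        μ[fun ω => ν ⬝ᵥ Z ω |
            MeasurableSpace.comap (fun ω => P.mulVec (Z ω)) inferInstance]
          =ᵐ[μ] fun ω => a ⬝ᵥ P.mulVec (Z ω))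
    -- condition (A2)
    (hA2 : ∀ ν : Fin p → ℝ, (∀ u ∈ S, ν ⬝ᵥ u = 0) →
      ∃ c : ℝ,
        (fun ω =>
          (μ[fun ω' => (ν ⬝ᵥ Z ω') ^ 2 |
              MeasurableSpace.comap (fun ω' => P.mulVec (Z ω')) inferInstance]) ω
          - ((μ[fun ω' => ν ⬝ᵥ Z ω' |
              MeasurableSpace.comap (fun ω' => P.mulVec (Z ω')) inferInstance]) ω) ^ 2)
          =ᵐ[μ] fun _ => c) :
    (∀ ν : Fin p → ℝ, (∀ u ∈ S, ν ⬝ᵥ u = 0) →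
      (fun ϖ => ν ⬝ᵥ (Amat μ p Z T C ϖ).mulVec ν) =ᵐ[μ.prod μ] fun _ => 2 * (ν ⬝ᵥ ν)) ∧
    (∀ᵐ ϖ ∂(μ.prod μ),
      Submodule.span ℝ
        (Set.range (((2 : ℝ) • (1 : Matrix (Fin p) (Fin p) ℝ) - Amat μ p Z T C ϖ)ᵀ)) ≤ S) := by
  have hZ : Measurable Z := by
    rw [show Z = fun ω => R *ᵥ (X ω - μv) from funext hZdef]
    exact (continuous_const.matrix_mulVec continuous_id).measurable.comp (hX.sub measurable_const)
  have hZi := memLp_two_apply_of_integral_mul_self_ne_zero (μ := μ) hZ fun i => by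
    rw [hZcov, one_apply_eq]; exact one_ne_zero
  have hkey := fun ν (hν : ∀ u ∈ S, ν ⬝ᵥ u = 0) w =>
    dotProduct_Amat_mulVec_ae_eq hZ hZi (integral_dotProduct_mul_dotProduct hZi hZcov) hT hC
      hPsymm hPidem hPrange hPZmeas hcentral hA1 hA2 hν w
  refine ⟨fun ν hν => hkey ν hν ν, ?_⟩
  have hcols : ∀ᵐ ϖ ∂(μ.prod μ), ∀ j k : Fin p,
      (Pi.single k 1 - P *ᵥ Pi.single k 1) ⬝ᵥ Amat μ p Z T C ϖ *ᵥ Pi.single j 1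
        = 2 * ((Pi.single k 1 - P *ᵥ Pi.single k 1) ⬝ᵥ Pi.single j 1) := by
    simp only [ae_all_iff]
    exact fun j k => hkey _ (sub_mulVec_dotProduct_eq_zero hPsymm hPidem hPrange _) _
  filter_upwards [hcols] with ϖ h
  exact span_range_transpose_smul_one_sub_le hPsymm hPrange h

/-- under conditions (A1) and (A2), for every `ν` orthogonal to the central
subspace `S = S_{(T,C)|Z}` one has `νᵀ E[(Z−Z̃)(Z−Z̃)ᵀ | T,T̃,C,C̃] ν = 2 νᵀν` a.s.;
consequently the column space of `2I_p − E[(Z−Z̃)(Z−Z̃)ᵀ | T,T̃,C,C̃]` is a.s. contained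
in `S`. -/
theorem stmt11 {Ω : Type*} [MeasurableSpace Ω] [StandardBorelSpace Ω]
    (μ : Measure Ω) [IsProbabilityMeasure μ]
    (p : ℕ) (X : Ω → Fin p → ℝ) (hX : Measurable X)
    (μv : Fin p → ℝ) (hμv : ∀ i, μv i = ∫ ω, X ω i ∂μ)
    (Sig : Matrix (Fin p) (Fin p) ℝ)
    (hSig : ∀ i j, Sig i j = ∫ ω, (X ω i - μv i) * (X ω j - μv j) ∂μ)
    (hSigpd : Sig.PosDef)
    -- `R = Σ^{-1/2}` and `Z = Σ^{-1/2}(X − μ)` is the standardized covariate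
    (R : Matrix (Fin p) (Fin p) ℝ) (hRpd : R.PosDef) (hRR : R * R = Sig⁻¹)
    (Z : Ω → Fin p → ℝ) (hZdef : ∀ ω, Z ω = R.mulVec (X ω - μv))
    (hZmean : ∀ i, ∫ ω, Z ω i ∂μ = 0)
    (hZcov : ∀ i j, ∫ ω, Z ω i * Z ω j ∂μ = (1 : Matrix (Fin p) (Fin p) ℝ) i j)
    (T C : Ω → ℝ) (hT : Measurable T) (hC : Measurable C)
    -- the central subspace `S = S_{(T,C)|Z}`, with orthogonal projection matrix `P` onto it
    (S : Submodule ℝ (Fin p → ℝ)) (P : Matrix (Fin p) (Fin p) ℝ)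
    (hPsymm : Pᵀ = P) (hPidem : P * P = P)
    (hPrange : ∀ v : Fin p → ℝ, v ∈ S ↔ ∃ w, P.mulVec w = v)
    (hPZmeas : Measurable (fun ω => P.mulVec (Z ω)))
    (hcentral : CondIndepFun (MeasurableSpace.comap (fun ω => P.mulVec (Z ω)) inferInstance)
      hPZmeas.comap_le (fun ω => (T ω, C ω)) Z μ)
    (hmin : ∀ (S' : Submodule ℝ (Fin p → ℝ)) (P' : Matrix (Fin p) (Fin p) ℝ),
      P'ᵀ = P' → P' * P' = P' → (∀ v, v ∈ S' ↔ ∃ w, P'.mulVec w = v) →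
      ∀ hP'Z : Measurable (fun ω => P'.mulVec (Z ω)),
      CondIndepFun (MeasurableSpace.comap (fun ω => P'.mulVec (Z ω)) inferInstance)
        hP'Z.comap_le (fun ω => (T ω, C ω)) Z μ → S ≤ S')
    -- condition (A1)
    (hA1 : ∀ ν : Fin p → ℝ, (∀ u ∈ S, ν ⬝ᵥ u = 0) →
      ∃ a : Fin p → ℝ,
        μ[fun ω => ν ⬝ᵥ Z ω |
            MeasurableSpace.comap (fun ω => P.mulVec (Z ω)) inferInstance]
          =ᵐ[μ] fun ω => a ⬝ᵥ P.mulVec (Z ω))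
    -- condition (A2)
    (hA2 : ∀ ν : Fin p → ℝ, (∀ u ∈ S, ν ⬝ᵥ u = 0) →
      ∃ c : ℝ,
        (fun ω =>
          (μ[fun ω' => (ν ⬝ᵥ Z ω') ^ 2 |
              MeasurableSpace.comap (fun ω' => P.mulVec (Z ω')) inferInstance]) ω
          - ((μ[fun ω' => ν ⬝ᵥ Z ω' |
              MeasurableSpace.comap (fun ω' => P.mulVec (Z ω')) inferInstance]) ω) ^ 2)
          =ᵐ[μ] fun _ => c) :
    (∀ ν : Fin p → ℝ, (∀ u ∈ S, ν ⬝ᵥ u = 0) →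
      (fun ϖ => ν ⬝ᵥ (Amat μ p Z T C ϖ).mulVec ν) =ᵐ[μ.prod μ] fun _ => 2 * (ν ⬝ᵥ ν)) ∧
    (∀ᵐ ϖ ∂(μ.prod μ),
      Submodule.span ℝ
        (Set.range (((2 : ℝ) • (1 : Matrix (Fin p) (Fin p) ℝ) - Amat μ p Z T C ϖ)ᵀ)) ≤ S) :=
  stmt11_general μ p X hX μv R Z hZdef hZcov T C hT hC S P hPsymm hPidem hPrange hPZmeas hcentral
    hA1 hA2
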